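/- Let W^E_1, ..., W^E_L with W^E_l ∈ ℝ^{d_l × d_{l-1}} be the encoder weight matrices of an autoencoder whose encoder is z(x) = Φ_L(W^E_L Φ_{L-1}( ··· Φ_1(W^E_1 x + b^E_1) ··· ) + b^E_L) with d_L = d_z and d_0 = d_x, and let W^D_1, ..., W^D_L with W^D_l ∈ ℝ^{d'_l × d'_{l-1}}, d'_0 = d_z, d'_L = d_x, be the decoder weight matrices of the decoder x̂(z) defined analogously, all activations Φ being differentiable functions ℝ → ℝ applied coordinatewise. Define the symmetric path lasso matrix W_PL := sqrt( ( (W^E_L)² ··· (W^E_1)² ) + ( (W^D_L)² ··· (W^D_1)² )ᵀ ), with squares and square root element-wise. If (W_PL)_{ji} = 0 for some j ∈ {1,...,d_z} and i ∈ {1,...,d_x}, then ∂z_j/∂x_i = 0 for every x ∈ ℝ^{d_x} and ∂x̂_i/∂z_j = 0 for every z ∈ ℝ^{d_z}. -/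

import Mathlib

/-!
Squaring the weights turns every entry of `chainProd` into a sum, over all paths through the
network, of products of squared weights. Hence a zero entry `(j, i)` of the squared path lasso
matrix means that every path from input `i` to output `j` crosses a zero weight. By the chain
rule, `∂y_j/∂x_i` is the sum over `k` of `Φ'_L(⋯) · W_{L,jk} · ∂y^{(L-1)}_k/∂x_i`, and induction
on the depth shows that each of these terms vanishes.
-/

open Matrix

/-- The ordinary matrix product `M_L * M_{L-1} * ⋯ * M_1` of a chain of matrices
`M_l ∈ ℝ^{d_l × d_{l-1}}` (the empty product being the identity). -/
noncomputable def chainProd (d : ℕ → ℕ)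
    (M : ∀ l : ℕ, Matrix (Fin (d (l + 1))) (Fin (d l)) ℝ) :
    (L : ℕ) → Matrix (Fin (d L)) (Fin (d 0)) ℝ
  | 0 => 1
  | L + 1 => M L * chainProd d M L

/-- The feedforward network
`y(x) = Φ_L(W_L Φ_{L-1}(W_{L-1} ⋯ Φ_1(W_1 x + b_1) ⋯) + b_L)`,
with element-wise activation functions `Φ_l : ℝ → ℝ` applied coordinatewise. -/
noncomputable def netOut (d : ℕ → ℕ)
    (W : ∀ l : ℕ, Matrix (Fin (d (l + 1))) (Fin (d l)) ℝ)
    (b : ∀ l : ℕ, Fin (d (l + 1)) → ℝ) (Φ : ℕ → ℝ → ℝ) :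
    (L : ℕ) → (Fin (d 0) → ℝ) → Fin (d L) → ℝ
  | 0, x => x
  | L + 1, x => fun i => Φ L ((W L).mulVec (netOut d W b Φ L x) i + b L i)

/-- The chain product of the element-wise squared weight matrices; its element-wise square root
is the path lasso matrix. -/
noncomputable def pathLassoSq (d : ℕ → ℕ) (W : ∀ l : ℕ, Matrix (Fin (d (l + 1))) (Fin (d l)) ℝ)
    (L : ℕ) : Matrix (Fin (d L)) (Fin (d 0)) ℝ :=
  chainProd d (fun l => (W l).map (fun a => a ^ 2)) L

lemma chainProd_nonneg (d : ℕ → ℕ) (M : ∀ l : ℕ, Matrix (Fin (d (l + 1))) (Fin (d l)) ℝ)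
    (hM : ∀ l p q, 0 ≤ M l p q) (L : ℕ) (p : Fin (d L)) (q : Fin (d 0)) :
    0 ≤ chainProd d M L p q := by
  induction L with
  | zero => simp only [chainProd, one_apply]; split <;> norm_num
  | succ L ih =>
    rw [chainProd, mul_apply]
    exact Finset.sum_nonneg fun k _ => mul_nonneg (hM L p k) (ih k)

lemma pathLassoSq_nonneg (d : ℕ → ℕ) (W : ∀ l : ℕ, Matrix (Fin (d (l + 1))) (Fin (d l)) ℝ)
    (L : ℕ) (p : Fin (d L)) (q : Fin (d 0)) : 0 ≤ pathLassoSq d W L p q :=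
  chainProd_nonneg d _ (fun _ _ _ => sq_nonneg _) L p q

lemma pathLassoSq_succ_eq_zero {d : ℕ → ℕ} {W : ∀ l : ℕ, Matrix (Fin (d (l + 1))) (Fin (d l)) ℝ}
    {L : ℕ} {j : Fin (d (L + 1))} {i : Fin (d 0)} (h : pathLassoSq d W (L + 1) j i = 0)
    (k : Fin (d L)) : W L j k = 0 ∨ pathLassoSq d W L k i = 0 := by
  have hsum : ∑ k, W L j k ^ 2 * pathLassoSq d W L k i = 0 := h
  have hterm := (Finset.sum_eq_zero_iff_of_nonneg fun k _ =>
    mul_nonneg (sq_nonneg (W L j k)) (pathLassoSq_nonneg d W L k i)).mp hsum k (Finset.mem_univ k)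
  simpa using hterm

section Network

variable (d : ℕ → ℕ) (W : ∀ l : ℕ, Matrix (Fin (d (l + 1))) (Fin (d l)) ℝ)
  (b : ∀ l : ℕ, Fin (d (l + 1)) → ℝ) (Φ : ℕ → ℝ → ℝ)

lemma netOut_succ_apply (L : ℕ) (x : Fin (d 0) → ℝ) (j : Fin (d (L + 1))) :
    netOut d W b Φ (L + 1) x j = Φ L (∑ k, W L j k * netOut d W b Φ L x k + b L j) :=
  rfl

lemma differentiable_netOut_apply (hΦ : ∀ l, Differentiable ℝ (Φ l)) (L : ℕ) (k : Fin (d L)) :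
    Differentiable ℝ (fun x => netOut d W b Φ L x k) := by
  induction L with
  | zero => exact differentiable_apply k
  | succ L ih =>
    simp only [netOut_succ_apply]
    exact (hΦ L).comp <| (Differentiable.fun_sum fun k _ => (ih k).const_mul _).add_const _

lemma fderiv_netOut_succ_apply (hΦ : ∀ l, Differentiable ℝ (Φ l)) (L : ℕ) (j : Fin (d (L + 1)))
    (x v : Fin (d 0) → ℝ) :
    fderiv ℝ (fun x => netOut d W b Φ (L + 1) x j) x v =
      deriv (Φ L) (∑ k, W L j k * netOut d W b Φ L x k + b L j) *
        ∑ k, W L j k * fderiv ℝ (fun x => netOut d W b Φ L x k) x v := by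
  have hpre : HasFDerivAt (fun x => ∑ k, W L j k * netOut d W b Φ L x k + b L j)
      (∑ k, W L j k • fderiv ℝ (fun x => netOut d W b Φ L x k) x) x :=
    (HasFDerivAt.fun_sum fun k _ =>
      ((differentiable_netOut_apply d W b Φ hΦ L k x).hasFDerivAt.const_mul _)).add_const _
  have hcomp : HasFDerivAt (fun x => netOut d W b Φ (L + 1) x j)
      (deriv (Φ L) (∑ k, W L j k * netOut d W b Φ L x k + b L j) •
        ∑ k, W L j k • fderiv ℝ (fun x => netOut d W b Φ L x k) x) x :=
    (hΦ L _).hasDerivAt.comp_hasFDerivAt x hpre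
  simp [hcomp.fderiv]

theorem fderiv_netOut_apply_single_eq_zero (hΦ : ∀ l, Differentiable ℝ (Φ l)) (L : ℕ)
    (j : Fin (d L)) (i : Fin (d 0)) (h : pathLassoSq d W L j i = 0) (x : Fin (d 0) → ℝ) :
    fderiv ℝ (fun x => netOut d W b Φ L x j) x (Pi.single i 1) = 0 := by
  induction L with
  | zero =>
    have hji : j ≠ i := fun hji => by subst hji; simp [pathLassoSq, chainProd] at h
    simp [netOut, fderiv_apply, Pi.single_eq_of_ne hji]
  | succ L ih =>
    rw [fderiv_netOut_succ_apply d W b Φ hΦ]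
    refine mul_eq_zero_of_right _ (Finset.sum_eq_zero fun k _ => ?_)
    rcases pathLassoSq_succ_eq_zero h k with hW | hC
    · rw [hW, zero_mul]
    · rw [ih k hC, mul_zero]

end Network

/-- For an autoencoder with encoder `z(x)` (layer widths `dE`,
`dE 0 = d_x`, `dE L = d_z`) and decoder `x̂(z)` (layer widths `dD`, `dD 0 = d_z`,
`dD L = d_x`), both with differentiable element-wise activations, define the
symmetric path lasso matrix
`W_PL := sqrt(((W^E_L)² ⋯ (W^E_1)²) + ((W^D_L)² ⋯ (W^D_1)²)ᵀ)` (squares and square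
root element-wise). If `(W_PL)_{ji} = 0`, then `∂z_j/∂x_i = 0` for every `x` and
`∂x̂_i/∂z_j = 0` for every `z`. -/
theorem autoencoder_pathLasso_zero_implies_partials_zero (L : ℕ) (dE dD : ℕ → ℕ)
    (hlat : dE L = dD 0) (hamb : dE 0 = dD L)
    (WE : ∀ l : ℕ, Matrix (Fin (dE (l + 1))) (Fin (dE l)) ℝ)
    (bE : ∀ l : ℕ, Fin (dE (l + 1)) → ℝ) (ΦE : ℕ → ℝ → ℝ)
    (WD : ∀ l : ℕ, Matrix (Fin (dD (l + 1))) (Fin (dD l)) ℝ)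
    (bD : ∀ l : ℕ, Fin (dD (l + 1)) → ℝ) (ΦD : ℕ → ℝ → ℝ)
    (hΦE : ∀ l, Differentiable ℝ (ΦE l)) (hΦD : ∀ l, Differentiable ℝ (ΦD l))
    (j : Fin (dE L)) (i : Fin (dE 0))
    (hzero :
      Real.sqrt ((chainProd dE (fun l => (WE l).map (fun a => a ^ 2)) L) j i +
        ((chainProd dD (fun l => (WD l).map (fun a => a ^ 2)) L)ᵀ)
          (Fin.cast hlat j) (Fin.cast hamb i)) = 0) :
    (∀ x : Fin (dE 0) → ℝ,
        fderiv ℝ (fun x => netOut dE WE bE ΦE L x j) x (Pi.single i 1) = 0) ∧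
      (∀ z : Fin (dD 0) → ℝ,
        fderiv ℝ (fun z => netOut dD WD bD ΦD L z (Fin.cast hamb i)) z
          (Pi.single (Fin.cast hlat j) 1) = 0) := by
  have hE := pathLassoSq_nonneg dE WE L j i
  have hD := pathLassoSq_nonneg dD WD L (Fin.cast hamb i) (Fin.cast hlat j)
  have hsum : pathLassoSq dE WE L j i + pathLassoSq dD WD L (Fin.cast hamb i) (Fin.cast hlat j)
      = 0 :=
    le_antisymm (Real.sqrt_eq_zero'.mp hzero) (add_nonneg hE hD)
  obtain ⟨hE0, hD0⟩ := (add_eq_zero_iff_of_nonneg hE hD).mp hsum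
  exact ⟨fderiv_netOut_apply_single_eq_zero dE WE bE ΦE hΦE L j i hE0,
    fderiv_netOut_apply_single_eq_zero dD WD bD ΦD hΦD L _ _ hD0⟩
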